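/- arXiv:1910.10611 — 7 statements merged into one kernel-verified Lean document; each statement's English description precedes it below -/
import Mathlib

section
/- For all integers n and all odd integers m, F_{n+2m} - F_n = L_m * F_{n+m}, where F denotes the Fibonacci numbers and L the Lucas numbers. -/
def lucasNat : ℕ → ℕ
  | 0 => 2
  | 1 => 1
  | (n + 2) => lucasNat (n + 1) + lucasNat n

noncomputable def F (n : ℤ) : ℤ :=
  if 0 ≤ n then Nat.fib n.toNat else (-1) ^ ((-n).toNat + 1) * Nat.fib (-n).toNat

noncomputable def L (n : ℤ) : ℤ :=
  if 0 ≤ n then lucasNat n.toNat else (-1) ^ (-n).toNat * lucasNat (-n).toNat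

/-!
By Binet's formulas `F n = (φ ^ n - ψ ^ n) / √5` and `L n = φ ^ n + ψ ^ n`, valid for all integers
`n`, the identity becomes `φ ^ (n + 2m) - ψ ^ (n + 2m) - φ ^ n + ψ ^ n
= (φ ^ m + ψ ^ m) (φ ^ (n + m) - ψ ^ (n + m))`. Expanding the right-hand side, the cross terms are
`(φ ψ) ^ m (φ ^ n - ψ ^ n)`, and `(φ ψ) ^ m = (-1) ^ m = -1` because `m` is odd.
-/

open Real goldenRatio

theorem zpow_add_two_mul_sub_zpow_of_mul_eq_neg_one {K : Type*} [Field K] {a b : K}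
    (hab : a * b = -1) (n : ℤ) {m : ℤ} (hm : Odd m) :
    a ^ (n + 2 * m) - b ^ (n + 2 * m) - (a ^ n - b ^ n)
      = (a ^ m + b ^ m) * (a ^ (n + m) - b ^ (n + m)) := by
  have ha : a ≠ 0 := left_ne_zero_of_mul (hab ▸ neg_ne_zero.mpr one_ne_zero)
  have hb : b ≠ 0 := right_ne_zero_of_mul (hab ▸ neg_ne_zero.mpr one_ne_zero)
  have hpow : a ^ m * b ^ m = -1 := by rw [← mul_zpow, hab, hm.neg_one_zpow]
  simp only [zpow_add₀ ha, zpow_add₀ hb, two_mul]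
  linear_combination -(a ^ n - b ^ n) * hpow

theorem F_eq_intFib (n : ℤ) : F n = Int.fib n := by
  obtain ⟨k, rfl | rfl⟩ := n.eq_nat_or_neg
  · simp [F]
  · rw [Int.fib_neg_natCast]
    simp [F]

theorem L_neg_natCast (k : ℕ) : L (-k) = (-1) ^ k * lucasNat k := by
  rcases k.eq_zero_or_pos with rfl | hk
  · simp [L]
  · simp [L, hk.ne']

theorem lucasNat_eq_binet : ∀ k : ℕ, (lucasNat k : ℝ) = φ ^ k + ψ ^ k
  | 0 => by norm_num [lucasNat]
  | 1 => by simp [lucasNat, goldenRatio_add_goldenConj]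
  | k + 2 => by
    rw [lucasNat, Nat.cast_add, lucasNat_eq_binet (k + 1), lucasNat_eq_binet k]
    linear_combination -(φ ^ k * goldenRatio_sq + ψ ^ k * goldenConj_sq)

theorem L_eq_binet (n : ℤ) : (L n : ℝ) = φ ^ n + ψ ^ n := by
  obtain ⟨k, rfl | rfl⟩ := n.eq_nat_or_neg
  · simp [L, lucasNat_eq_binet]
  · rw [L_neg_natCast, zpow_neg, zpow_neg, zpow_natCast, zpow_natCast, ← inv_pow, ← inv_pow,
      inv_goldenRatio, inv_goldenConj, neg_pow ψ, neg_pow φ]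
    push_cast
    rw [lucasNat_eq_binet]
    ring

theorem stmt0 (n m : ℤ) (hm : Odd m) : F (n + 2 * m) - F n = L m * F (n + m) := by
  apply Int.cast_injective (α := ℝ)
  push_cast
  simp only [F_eq_intFib, coe_intFib_eq, L_eq_binet]
  rw [← sub_div, mul_div_assoc']
  congr 1
  linear_combination zpow_add_two_mul_sub_zpow_of_mul_eq_neg_one goldenRatio_mul_goldenConj n hm
end

section
/- For all odd integers n and all integers m, F_n * F_{n+2m} = F_{n+m}^2 + F_m^2. -/
lemma F_ofNat (k : ℕ) : F (k : ℤ) = Nat.fib k := by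
  simp [F]

lemma F_neg (k : ℕ) : F (-(k : ℤ)) = (-1) ^ (k + 1) * Nat.fib k := by
  cases k with
  | zero => simp [F]
  | succ j =>
    rw [F, if_neg (by omega)]
    norm_num

lemma F_zero : F 0 = 0 := by simp [F]
lemma F_one : F 1 = 1 := by simp [F]
lemma F_two : F 2 = 1 := by
  rw [show (2:ℤ) = ((2:ℕ):ℤ) by norm_num, F_ofNat]; norm_num

lemma F_rec (k : ℤ) : F (k + 2) = F (k + 1) + F k := by
  rcases le_or_gt 0 k with h | h
  · lift k to ℕ using h
    rw [show (k : ℤ) + 2 = ((k + 2 : ℕ) : ℤ) by push_cast; ring,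
      show (k : ℤ) + 1 = ((k + 1 : ℕ) : ℤ) by push_cast; ring,
      F_ofNat, F_ofNat, F_ofNat, Nat.fib_add_two]
    push_cast; ring
  · rcases eq_or_lt_of_le (by omega : k ≤ -1) with h1 | h1
    · subst h1
      have hm1 : F (-1) = 1 := by
        rw [show (-1:ℤ) = -((1:ℕ):ℤ) by norm_num, F_neg]; norm_num
      norm_num [F_one, F_zero, hm1]
    · obtain ⟨j, rfl⟩ : ∃ j : ℕ, k = -((j + 2 : ℕ) : ℤ) := ⟨(-k - 2).toNat, by omega⟩
      rw [show -((j + 2 : ℕ) : ℤ) + 2 = -(j : ℤ) by push_cast; ring,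
        show -((j + 2 : ℕ) : ℤ) + 1 = -((j + 1 : ℕ) : ℤ) by push_cast; ring,
        F_neg, F_neg, F_neg, Nat.fib_add_two]
      push_cast; ring

/-- Two Fibonacci-like integer sequences agreeing at 0 and 1 are equal. -/
lemma fib_like_eq (f g : ℤ → ℤ) (hf : ∀ k, f (k + 2) = f (k + 1) + f k)
    (hg : ∀ k, g (k + 2) = g (k + 1) + g k) (h0 : f 0 = g 0) (h1 : f 1 = g 1) :
    ∀ k, f k = g k := by
  have key : ∀ k : ℤ, f k = g k ∧ f (k + 1) = g (k + 1) := by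
    intro k
    induction k using Int.induction_on with
    | zero => exact ⟨h0, by rw [zero_add]; exact h1⟩
    | succ j ih =>
      refine ⟨ih.2, ?_⟩
      rw [show (j:ℤ) + 1 + 1 = j + 2 by ring, hf j, hg j, ih.1, ih.2]
    | pred j ih =>
      refine ⟨?_, by rw [show -(j:ℤ) - 1 + 1 = -j by ring]; exact ih.1⟩
      have hfj := hf (-j - 1); have hgj := hg (-j - 1)
      rw [show -(j:ℤ) - 1 + 2 = -j + 1 by ring, show -(j:ℤ) - 1 + 1 = -j by ring]
        at hfj hgj
      have e1 := ih.1
      have e2 := ih.2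
      linarith [hfj, hgj, e1, e2]
  exact fun k => (key k).1

lemma F_add (b a : ℤ) : F (a + b) = F (a + 1) * F b + F a * F (b - 1) := by
  refine fib_like_eq (fun a => F (a + b)) (fun a => F (a + 1) * F b + F a * F (b - 1))
    ?_ ?_ ?_ ?_ a
  · intro k
    show F (k + 2 + b) = F (k + 1 + b) + F (k + b)
    have r := F_rec (k + b)
    rw [show k + b + 2 = k + 2 + b by ring, show k + b + 1 = k + 1 + b by ring] at r
    exact r
  · intro k
    show F (k + 2 + 1) * F b + F (k + 2) * F (b - 1) =
      (F (k + 1 + 1) * F b + F (k + 1) * F (b - 1)) + (F (k + 1) * F b + F k * F (b - 1))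
    have r1 := F_rec k
    have r2 := F_rec (k + 1)
    rw [show k + 1 + 2 = k + 2 + 1 by ring] at r2
    linear_combination F b * r2 + F (b - 1) * r1
  · show F (0 + b) = F (0 + 1) * F b + F 0 * F (b - 1)
    rw [zero_add, zero_add, F_one, F_zero]; ring
  · show F (1 + b) = F (1 + 1) * F b + F 1 * F (b - 1)
    have r := F_rec (b - 1)
    rw [show b - 1 + 2 = 1 + b by ring, show b - 1 + 1 = b by ring] at r
    rw [show (1:ℤ) + 1 = 2 by norm_num, F_two, F_one, r]; ring

noncomputable def E (n : ℤ) : ℤ := if Even n then 1 else -1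

lemma E_succ (n : ℤ) : E (n + 1) = - E n := by
  by_cases h : Even n <;> simp [E, h, Int.even_add_one]

lemma cas_step (k : ℤ) :
    F (k + 2) ^ 2 - F (k + 1) * F (k + 3) = -(F (k + 1) ^ 2 - F k * F (k + 2)) := by
  have r1 := F_rec k
  have r2 := F_rec (k + 1)
  rw [show k + 1 + 2 = k + 3 by ring, show k + 1 + 1 = k + 2 by ring] at r2
  rw [r2]
  linear_combination F (k + 2) * r1

lemma cassini : ∀ k : ℤ, F (k + 1) ^ 2 - F k * F (k + 2) = E k := by
  intro k
  induction k using Int.induction_on with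
  | zero =>
    rw [zero_add, zero_add, F_one, F_zero, F_two]
    simp [E]
  | succ j ih =>
    have s := cas_step j
    rw [show (j:ℤ) + 1 + 1 = j + 2 by ring, show (j:ℤ) + 1 + 2 = j + 3 by ring, E_succ,
      s, ih]
  | pred j ih =>
    have s := cas_step (-j - 1)
    rw [show -(j:ℤ) - 1 + 2 = -j + 1 by ring, show -(j:ℤ) - 1 + 3 = -j + 2 by ring,
      show -(j:ℤ) - 1 + 1 = -j by ring] at s
    rw [show -(j:ℤ) - 1 + 1 = -j by ring, show -(j:ℤ) - 1 + 2 = -j + 1 by ring]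
    have hE : E (-(j:ℤ) - 1) = - E (-j) := by
      have h := E_succ (-(j:ℤ) - 1)
      rw [show -(j:ℤ) - 1 + 1 = -j by ring] at h
      linarith
    rw [hE]
    linarith [s, ih]

lemma docagne (n : ℤ) (hn : Odd n) (m : ℤ) :
    F (n + 1) * F (n + m) - F n * F (n + m + 1) = - F m := by
  have hE : E n = -1 := by simp [E, Int.not_even_iff_odd.mpr hn]
  have base1 : F (n + 1) ^ 2 - F n * F (n + 2) = -1 := by rw [cassini n, hE]
  refine fib_like_eq (fun m => F (n + 1) * F (n + m) - F n * F (n + m + 1))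
    (fun m => - F m) ?_ ?_ ?_ ?_ m
  · intro k
    show F (n + 1) * F (n + (k + 2)) - F n * F (n + (k + 2) + 1) =
      (F (n + 1) * F (n + (k + 1)) - F n * F (n + (k + 1) + 1)) +
      (F (n + 1) * F (n + k) - F n * F (n + k + 1))
    have r1 := F_rec (n + k)
    have r2 := F_rec (n + k + 1)
    rw [show n + (k + 2) + 1 = n + k + 1 + 2 by ring, show n + (k + 2) = n + k + 2 by ring,
      show n + (k + 1) + 1 = n + k + 1 + 1 by ring, show n + (k + 1) = n + k + 1 by ring]
    linear_combination F (n + 1) * r1 - F n * r2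
  · intro k
    show - F (k + 2) = - F (k + 1) + - F k
    linear_combination - F_rec k
  · show F (n + 1) * F (n + 0) - F n * F (n + 0 + 1) = - F 0
    rw [add_zero, F_zero]; ring
  · show F (n + 1) * F (n + 1) - F n * F (n + 1 + 1) = - F 1
    rw [show n + 1 + 1 = n + 2 by ring, F_one]
    linear_combination base1

theorem stmt6 (n m : ℤ) (hn : Odd n) : F n * F (n + 2 * m) = F (n + m) ^ 2 + F m ^ 2 := by
  have h1 := F_add m (n + m)
  rw [show n + m + m = n + 2 * m by ring] at h1
  have h2 := F_add m n
  have h3 := docagne n hn m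
  linear_combination F n * h1 - F (n + m) * h2 - F m * h3
end

section
/- For all positive even integers m and positive integers n: arctan(F_{2m} / F_{2n+2m-1}) = arctan(L_m / L_{2n+m-1}) - arctan(L_m / L_{2n+3m-1}). -/
lemma lucas_pos (n : ℕ) : 0 < lucasNat n := by
  induction n using Nat.twoStepInduction with
  | zero => simp [lucasNat]
  | one => simp [lucasNat]
  | more n h1 h2 => simp only [lucasNat]; omega

lemma lucas_step (n : ℕ) : lucasNat (n + 1) < lucasNat (n + 2) := by
  have := lucas_pos n
  simp only [lucasNat]; omega

lemma lucas_lt_aux (j i : ℕ) : lucasNat (i + 1) < lucasNat (j + i + 2) := by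
  induction j with
  | zero => simpa using lucas_step i
  | succ j ih =>
    have h := lucas_step (j + i + 1)
    calc lucasNat (i + 1) < lucasNat (j + i + 2) := ih
    _ < lucasNat (j + i + 1 + 2) := h
    _ = lucasNat (j + 1 + i + 2) := by ring_nf

lemma lucas_lt {i j : ℕ} (hi : 1 ≤ i) (hij : i < j) : lucasNat i < lucasNat j := by
  obtain ⟨i', rfl⟩ : ∃ i', i = i' + 1 := ⟨i - 1, by omega⟩
  obtain ⟨d, rfl⟩ : ∃ d, j = d + i' + 2 := ⟨j - i' - 2, by omega⟩
  exact lucas_lt_aux d i'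

open Real in
lemma lucas_real (n : ℕ) : (lucasNat n : ℝ) = goldenRatio ^ n + goldenConj ^ n := by
  induction n using Nat.twoStepInduction with
  | zero => norm_num [lucasNat]
  | one => simp [lucasNat, goldenRatio_add_goldenConj]
  | more n h1 h2 =>
    have : (lucasNat (n + 2) : ℝ) = (lucasNat (n + 1) : ℝ) + (lucasNat n : ℝ) := by
      simp [lucasNat]
    rw [this, h1, h2,
      show goldenRatio ^ (n + 2) = goldenRatio ^ n * goldenRatio ^ 2 by ring,
      show goldenConj ^ (n + 2) = goldenConj ^ n * goldenConj ^ 2 by ring,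
      goldenRatio_sq, goldenConj_sq]
    ring

lemma key1 (A B C D f g s : ℝ) (h1 : A * B = 1) (h3 : s ^ 2 = 5)
    (h4 : f * s = C * A ^ 2 - D * B ^ 2) (h5 : g * s = A ^ 2 - B ^ 2) :
    (A + B) * ((C * A ^ 3 + D * B ^ 3) - (C * A + D * B)) = 5 * (f * g) := by
  linear_combination (D*B^2 + C*A^2 + (C+D)*A*B) * h1 - (g*s) * h4 - (C*A^2 - D*B^2) * h5
    + f*g * h3

lemma key2 (A B C D f s : ℝ) (h1 : A * B = 1) (h2 : C * D = -1) (h3 : s ^ 2 = 5)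
    (h4 : f * s = C * A ^ 2 - D * B ^ 2) :
    (C * A + D * B) * (C * A ^ 3 + D * B ^ 3) + (A + B) ^ 2 = 5 * f ^ 2 := by
  linear_combination (A+B)^2*C*D * h1 + (A+B)^2 * h2 - (f*s + C*A^2 - D*B^2) * h4 + f^2 * h3

theorem stmt14 (m n : ℕ) (hm : 0 < m) (hme : Even m) (hn : 0 < n) :
    Real.arctan ((Nat.fib (2 * m) : ℝ) / Nat.fib (2 * n + 2 * m - 1)) =
      Real.arctan ((lucasNat m : ℝ) / lucasNat (2 * n + m - 1)) -
        Real.arctan ((lucasNat m : ℝ) / lucasNat (2 * n + 3 * m - 1)) := by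
  obtain ⟨k, hk, hkodd⟩ : ∃ k, 2 * n - 1 = k ∧ Odd k := ⟨2 * n - 1, rfl, ⟨n - 1, by omega⟩⟩
  have hk1 : 1 ≤ k := by omega
  rw [show 2 * n + 2 * m - 1 = k + 2 * m by omega, show 2 * n + m - 1 = k + m by omega,
    show 2 * n + 3 * m - 1 = k + 3 * m by omega]
  have hs : Real.sqrt 5 ^ 2 = 5 := Real.sq_sqrt (by norm_num)
  have hs0 : Real.sqrt 5 ≠ 0 := by positivity
  have hAB : Real.goldenRatio ^ m * Real.goldenConj ^ m = 1 := by
    rw [← mul_pow, Real.goldenRatio_mul_goldenConj, hme.neg_one_pow]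
  have hCD : Real.goldenRatio ^ k * Real.goldenConj ^ k = -1 := by
    rw [← mul_pow, Real.goldenRatio_mul_goldenConj, hkodd.neg_one_pow]
  have hg : (Nat.fib (2 * m) : ℝ) * Real.sqrt 5
      = (Real.goldenRatio ^ m) ^ 2 - (Real.goldenConj ^ m) ^ 2 := by
    rw [Real.coe_fib_eq, div_mul_cancel₀ _ hs0, show 2 * m = m * 2 by ring, pow_mul, pow_mul]
  have hf : (Nat.fib (k + 2 * m) : ℝ) * Real.sqrt 5
      = Real.goldenRatio ^ k * (Real.goldenRatio ^ m) ^ 2 - Real.goldenConj ^ k * (Real.goldenConj ^ m) ^ 2 := by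
    rw [Real.coe_fib_eq, div_mul_cancel₀ _ hs0, pow_add, pow_add,
      show 2 * m = m * 2 by ring, pow_mul, pow_mul]
  have ha : (lucasNat m : ℝ) = Real.goldenRatio ^ m + Real.goldenConj ^ m := lucas_real m
  have hb : (lucasNat (k + m) : ℝ)
      = Real.goldenRatio ^ k * Real.goldenRatio ^ m + Real.goldenConj ^ k * Real.goldenConj ^ m := by
    rw [lucas_real, pow_add, pow_add]
  have hc : (lucasNat (k + 3 * m) : ℝ)
      = Real.goldenRatio ^ k * (Real.goldenRatio ^ m) ^ 3 + Real.goldenConj ^ k * (Real.goldenConj ^ m) ^ 3 := by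
    rw [lucas_real, pow_add, pow_add, show 3 * m = m * 3 by ring, pow_mul, pow_mul]
  have H1 : (lucasNat m : ℝ) * ((lucasNat (k + 3 * m) : ℝ) - (lucasNat (k + m) : ℝ))
      = 5 * ((Nat.fib (k + 2 * m) : ℝ) * (Nat.fib (2 * m) : ℝ)) := by
    rw [ha, hb, hc]; exact key1 _ _ _ _ _ _ _ hAB hs hf hg
  have H2 : (lucasNat (k + m) : ℝ) * (lucasNat (k + 3 * m) : ℝ) + (lucasNat m : ℝ) ^ 2
      = 5 * (Nat.fib (k + 2 * m) : ℝ) ^ 2 := by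
    rw [ha, hb, hc]; exact key2 _ _ _ _ _ _ hAB hCD hs hf
  have ha0 : (0:ℝ) < (lucasNat m : ℝ) := by exact_mod_cast lucas_pos m
  have hb0 : (0:ℝ) < (lucasNat (k + m) : ℝ) := by exact_mod_cast lucas_pos (k + m)
  have hc0 : (0:ℝ) < (lucasNat (k + 3 * m) : ℝ) := by exact_mod_cast lucas_pos (k + 3 * m)
  have hf0 : (0:ℝ) < (Nat.fib (k + 2 * m) : ℝ) := by
    exact_mod_cast Nat.fib_pos.mpr (by omega)
  set a : ℝ := (lucasNat m : ℝ)
  set b : ℝ := (lucasNat (k + m) : ℝ)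
  set c : ℝ := (lucasNat (k + 3 * m) : ℝ)
  set f : ℝ := (Nat.fib (k + 2 * m) : ℝ)
  set g : ℝ := (Nat.fib (2 * m) : ℝ)
  have hx : 0 < a / b := div_pos ha0 hb0
  have hy : 0 < a / c := div_pos ha0 hc0
  rw [sub_eq_add_neg, ← Real.arctan_neg, Real.arctan_add (by nlinarith)]
  congr 1
  have hrhs : (a / b + -(a / c)) / (1 - a / b * -(a / c))
      = (a * (c - b)) / (b * c + a ^ 2) := by
    rw [div_eq_div_iff (ne_of_gt (by nlinarith [mul_pos hx hy])) (ne_of_gt (by positivity))]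
    field_simp
    ring
  rw [hrhs, show a * (c - b) = 5 * (f * g) from H1,
    show b * c + a ^ 2 = 5 * f ^ 2 from by linarith [H2]]
  rw [div_eq_div_iff (by positivity) (by positivity)]
  ring
end

section
/- For all positive odd integers m and positive integers n: arctan(F_{2m} / F_{2n+2m-1}) = arctan(F_m / F_{2n+m-1}) - arctan(F_m / F_{2n+3m-1}). -/
lemma cassini_s15 (n : ℕ) :
    (Nat.fib (n + 1) : ℤ) ^ 2 = Nat.fib n * Nat.fib (n + 2) + (-1) ^ n := by
  induction n with
  | zero => simp
  | succ n ih =>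
    have h1 : (Nat.fib (n + 2) : ℤ) = Nat.fib n + Nat.fib (n + 1) := by
      rw [Nat.fib_add_two]; push_cast; ring
    have h2 : (Nat.fib (n + 3) : ℤ) = Nat.fib (n + 1) + Nat.fib (n + 2) := by
      rw [show n + 3 = (n + 1) + 2 from rfl, Nat.fib_add_two]; push_cast; ring
    linear_combination (-1 : ℤ) * ih + (Nat.fib (n + 2) : ℤ) * h1 +
      (-(Nat.fib (n + 1) : ℤ)) * h2

theorem stmt15 (m n : ℕ) (hm : Odd m) (hn : 0 < n) :
    Real.arctan ((Nat.fib (2 * m) : ℝ) / Nat.fib (2 * n + 2 * m - 1)) =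
      Real.arctan ((Nat.fib m : ℝ) / Nat.fib (2 * n + m - 1)) -
        Real.arctan ((Nat.fib m : ℝ) / Nat.fib (2 * n + 3 * m - 1)) := by
  obtain ⟨k, rfl⟩ := hm
  obtain ⟨t, rfl⟩ : ∃ t, n = t + 1 := ⟨n - 1, by omega⟩
  rw [show 2 * (2 * k + 1) = 4 * k + 2 from by omega,
      show 2 * (t + 1) + (4 * k + 2) - 1 = 2 * t + 4 * k + 3 from by omega,
      show 2 * (t + 1) + (2 * k + 1) - 1 = 2 * t + 2 * k + 2 from by omega,
      show 2 * (t + 1) + 3 * (2 * k + 1) - 1 = 2 * t + 6 * k + 4 from by omega]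
  -- nat-level fib identities
  have hsucc : Nat.fib (2 * k + 2) = Nat.fib (2 * k) + Nat.fib (2 * k + 1) :=
    Nat.fib_add_two
  have h2m : Nat.fib (4 * k + 2) =
      Nat.fib (2 * k + 1) * Nat.fib (2 * k) +
        (Nat.fib (2 * k) + Nat.fib (2 * k + 1)) * Nat.fib (2 * k + 1) := by
    have h := Nat.fib_add (2 * k + 1) (2 * k)
    rw [show 2 * k + 1 + 2 * k + 1 = 4 * k + 2 from by omega,
        show 2 * k + 1 + 1 = 2 * k + 2 from by omega, hsucc] at h
    exact h
  have h4k1 : Nat.fib (4 * k + 1) = Nat.fib (2 * k + 1) ^ 2 + Nat.fib (2 * k) ^ 2 := by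
    have h := Nat.fib_two_mul_add_one (2 * k)
    rw [show 2 * (2 * k) + 1 = 4 * k + 1 from by omega] at h
    exact h
  have hr : Nat.fib (2 * t + 4 * k + 3) =
      Nat.fib (2 * t + 2 * k + 2) * Nat.fib (2 * k) +
        Nat.fib (2 * t + 2 * k + 3) * Nat.fib (2 * k + 1) := by
    have h := Nat.fib_add (2 * t + 2 * k + 2) (2 * k)
    rw [show 2 * t + 2 * k + 2 + 2 * k + 1 = 2 * t + 4 * k + 3 from by omega,
        show 2 * t + 2 * k + 2 + 1 = 2 * t + 2 * k + 3 from by omega] at h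
    exact h
  have hq : Nat.fib (2 * t + 6 * k + 4) =
      Nat.fib (2 * t + 2 * k + 2) * (Nat.fib (2 * k + 1) ^ 2 + Nat.fib (2 * k) ^ 2) +
        Nat.fib (2 * t + 2 * k + 3) *
          (Nat.fib (2 * k + 1) * Nat.fib (2 * k) +
            (Nat.fib (2 * k) + Nat.fib (2 * k + 1)) * Nat.fib (2 * k + 1)) := by
    have h := Nat.fib_add (2 * t + 2 * k + 2) (4 * k + 1)
    rw [show 2 * t + 2 * k + 2 + (4 * k + 1) + 1 = 2 * t + 6 * k + 4 from by omega,
        show 2 * t + 2 * k + 2 + 1 = 2 * t + 2 * k + 3 from by omega,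
        show 4 * k + 1 + 1 = 4 * k + 2 from by omega, h4k1, h2m] at h
    exact h
  -- Cassini consequences
  have hab : Nat.fib (2 * t + 2 * k + 4) =
      Nat.fib (2 * t + 2 * k + 2) + Nat.fib (2 * t + 2 * k + 3) := by
    rw [show 2 * t + 2 * k + 4 = 2 * t + 2 * k + 2 + 2 from by omega, Nat.fib_add_two,
        show 2 * t + 2 * k + 2 + 1 = 2 * t + 2 * k + 3 from by omega]
  have c1 : (Nat.fib (2 * t + 2 * k + 3) : ℝ) ^ 2 =
      (Nat.fib (2 * t + 2 * k + 2) : ℝ) ^ 2 +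
        Nat.fib (2 * t + 2 * k + 2) * Nat.fib (2 * t + 2 * k + 3) + 1 := by
    have h := cassini_s15 (2 * t + 2 * k + 2)
    rw [show 2 * t + 2 * k + 2 + 1 = 2 * t + 2 * k + 3 from by omega,
        show 2 * t + 2 * k + 2 + 2 = 2 * t + 2 * k + 4 from by omega, hab,
        show ((-1 : ℤ)) ^ (2 * t + 2 * k + 2) = 1 from by
          rw [show 2 * t + 2 * k + 2 = 2 * (t + k + 1) from by omega, pow_mul]; norm_num] at h
    have h' : (Nat.fib (2 * t + 2 * k + 3) : ℤ) ^ 2 =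
        (Nat.fib (2 * t + 2 * k + 2) : ℤ) ^ 2 +
          Nat.fib (2 * t + 2 * k + 2) * Nat.fib (2 * t + 2 * k + 3) + 1 := by
      push_cast at h ⊢; linear_combination h
    exact_mod_cast h'
  have c2 : (Nat.fib (2 * k + 1) : ℝ) ^ 2 =
      (Nat.fib (2 * k) : ℝ) ^ 2 + Nat.fib (2 * k + 1) * Nat.fib (2 * k) + 1 := by
    have h := cassini_s15 (2 * k)
    rw [hsucc, show ((-1 : ℤ)) ^ (2 * k) = 1 from by rw [pow_mul]; norm_num] at h
    have h' : (Nat.fib (2 * k + 1) : ℤ) ^ 2 =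
        (Nat.fib (2 * k) : ℤ) ^ 2 + Nat.fib (2 * k + 1) * Nat.fib (2 * k) + 1 := by
      push_cast at h ⊢; linear_combination h
    exact_mod_cast h'
  -- positivity
  have hau : (1 : ℝ) ≤ Nat.fib (2 * t + 2 * k + 2) := by
    exact_mod_cast Nat.fib_pos.mpr (by omega)
  have hbu : (1 : ℝ) ≤ Nat.fib (2 * t + 2 * k + 3) := by
    exact_mod_cast Nat.fib_pos.mpr (by omega)
  have huu : (1 : ℝ) ≤ Nat.fib (2 * k + 1) := by
    exact_mod_cast Nat.fib_pos.mpr (by omega)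
  have hwu : (0 : ℝ) ≤ Nat.fib (2 * k) := Nat.cast_nonneg _
  rw [h2m, hr, hq]
  push_cast
  -- generalize to opaque real variables
  generalize hA : (Nat.fib (2 * t + 2 * k + 2) : ℝ) = A at *
  generalize hB : (Nat.fib (2 * t + 2 * k + 3) : ℝ) = B at *
  generalize hU : (Nat.fib (2 * k + 1) : ℝ) = U at *
  generalize hW : (Nat.fib (2 * k) : ℝ) = W at *
  clear hA hB hU hW hsucc h2m h4k1 hr hq hab hn
  have hApos : (0 : ℝ) < A := by linarith
  have hF2pos : (0 : ℝ) < U * W + (W + U) * U := by nlinarith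
  have hRU : U ≤ A * W + B * U := by nlinarith
  have hRpos : (0 : ℝ) < A * W + B * U := by linarith
  have hQF2 : U * W + (W + U) * U < A * (U ^ 2 + W ^ 2) + B * (U * W + (W + U) * U) := by
    nlinarith
  have hQpos : (0 : ℝ) < A * (U ^ 2 + W ^ 2) + B * (U * W + (W + U) * U) := by linarith
  have hprod : U * (U * W + (W + U) * U) <
      (A * (U ^ 2 + W ^ 2) + B * (U * W + (W + U) * U)) * (A * W + B * U) := by
    have h1' : U * (U * W + (W + U) * U) ≤ (A * W + B * U) * (U * W + (W + U) * U) :=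
      mul_le_mul_of_nonneg_right hRU hF2pos.le
    have h2' : (A * W + B * U) * (U * W + (W + U) * U) <
        (A * W + B * U) * (A * (U ^ 2 + W ^ 2) + B * (U * W + (W + U) * U)) :=
      mul_lt_mul_of_pos_left hQF2 hRpos
    nlinarith
  have hlt : (U / (A * (U ^ 2 + W ^ 2) + B * (U * W + (W + U) * U))) *
      ((U * W + (W + U) * U) / (A * W + B * U)) < 1 := by
    rw [div_mul_div_comm, div_lt_one (by positivity)]
    exact hprod
  have key := Real.arctan_add hlt
  have hdenpos : (0 : ℝ) < 1 - U / (A * (U ^ 2 + W ^ 2) + B * (U * W + (W + U) * U)) *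
      ((U * W + (W + U) * U) / (A * W + B * U)) := by
    rw [div_mul_div_comm]
    have h9 := (div_lt_one (by positivity : (0:ℝ) <
      (A * (U ^ 2 + W ^ 2) + B * (U * W + (W + U) * U)) * (A * W + B * U))).mpr hprod
    linarith
  have harg : (U / (A * (U ^ 2 + W ^ 2) + B * (U * W + (W + U) * U)) +
      (U * W + (W + U) * U) / (A * W + B * U)) /
      (1 - U / (A * (U ^ 2 + W ^ 2) + B * (U * W + (W + U) * U)) *
        ((U * W + (W + U) * U) / (A * W + B * U))) = U / A := by
    rw [div_eq_div_iff hdenpos.ne' hApos.ne']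
    field_simp
    linear_combination (-((W + (W + U)) * U ^ 2)) * c1 +
      (-(A * (A * W + B * U))) * c2
  rw [harg] at key
  linarith
end

section
/- For all positive odd integers m and all positive integers t: sum_{n=1}^{t} arctan(F_{2m} / F_{2n+2m-1}) = sum_{n=1}^{m} arctan(F_m / F_{2n+m-1}) - sum_{n=1}^{m} arctan(F_m / F_{2n+2t+m-1}). -/
open Nat Finset Real

lemma fibCatalan (b : ℕ) : ∀ c : ℕ,
    (fib (c + b) : ℤ) ^ 2 - fib c * fib (c + 2 * b) = (-1) ^ c * (fib b : ℤ) ^ 2 := by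
  intro c
  induction c with
  | zero => simp
  | succ c ih =>
      have h1 := Nat.fib_add (c + b) (c + b)
      have h2 := Nat.fib_add c (c + 2 * b)
      rw [show (c + b) + (c + b) + 1 = c + (c + 2 * b) + 1 by ring] at h1
      have h3 : (fib (c + b) : ℤ) * fib (c + b) + fib (c + b + 1) * fib (c + b + 1)
          = (fib c : ℤ) * fib (c + 2 * b) + fib (c + 1) * fib (c + 2 * b + 1) := by
        exact_mod_cast h1.symm.trans h2
      rw [show c + 1 + b = c + b + 1 by ring, show c + 1 + 2 * b = c + 2 * b + 1 by ring]
      linear_combination h3 - ih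

lemma fibB (b : ℕ) : ∀ c : ℕ,
    ((-1 : ℤ)) ^ b * fib c = (fib (c + b) : ℤ) * fib (b + 1) - fib (c + b + 1) * fib b := by
  intro c
  induction c using Nat.twoStepInduction with
  | zero => simp; ring
  | one =>
      have h := fibCatalan 1 b
      rw [show b + 2 * 1 = b + 1 + 1 by ring] at h
      rw [show 1 + b = b + 1 by ring, show b + 1 + 1 = b + 1 + 1 from rfl]
      simp only [Nat.fib_one, Nat.cast_one, mul_one] at h ⊢
      linear_combination -h
  | more c ih1 ih2 =>
      have e1 : (fib (c + 2) : ℤ) = fib c + fib (c + 1) := by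
        have := Nat.fib_add_two (n := c); exact_mod_cast this
      have e2 : (fib (c + 2 + b) : ℤ) = fib (c + b) + fib (c + b + 1) := by
        rw [show c + 2 + b = (c + b) + 2 by ring]
        have := Nat.fib_add_two (n := c + b); exact_mod_cast this
      have e3 : (fib (c + 2 + b + 1) : ℤ) = fib (c + b + 1) + fib (c + b + 1 + 1) := by
        rw [show c + 2 + b + 1 = (c + b + 1) + 2 by ring]
        have := Nat.fib_add_two (n := c + b + 1); exact_mod_cast this
      rw [show c + 1 + b = c + b + 1 by ring] at ih2
      rw [e1, e2, e3]
      linear_combination ih1 + ih2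

lemma arctan_step (k j : ℕ) (hj : 1 ≤ j) (hjm : 2 * k + 1 < 2 * j) :
    Real.arctan ((fib (4 * k + 2) : ℝ) / fib (2 * j + 2 * k + 1)) =
      Real.arctan ((fib (2 * k + 1) : ℝ) / fib (2 * j)) -
        Real.arctan ((fib (2 * k + 1) : ℝ) / fib (2 * j + 4 * k + 2)) := by
  -- integer identities
  have zB : (fib (2 * j + 4 * k + 2) : ℤ)
      = fib (2 * j + 2 * k) * fib (2 * k + 1) + fib (2 * j + 2 * k + 1) * fib (2 * k + 2) := by
    have h := Nat.fib_add (2 * j + 2 * k) (2 * k + 1)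
    rw [show 2 * j + 2 * k + (2 * k + 1) + 1 = 2 * j + 4 * k + 2 by ring,
      show 2 * j + 2 * k + 1 = 2 * j + 2 * k + 1 from rfl, show 2 * k + 1 + 1 = 2 * k + 2 by ring] at h
    exact_mod_cast h
  have zA : (fib (2 * j) : ℤ)
      = (fib (2 * j + 2 * k) + fib (2 * j + 2 * k + 1)) * fib (2 * k + 1)
        - fib (2 * j + 2 * k + 1) * fib (2 * k + 2) := by
    have h := fibB (2 * k + 1) (2 * j)
    rw [show 2 * j + (2 * k + 1) = 2 * j + 2 * k + 1 by ring,
      show 2 * k + 1 + 1 = 2 * k + 2 by ring] at h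
    have h2 : (fib (2 * j + 2 * k + 1 + 1) : ℤ) = fib (2 * j + 2 * k) + fib (2 * j + 2 * k + 1) := by
      have := Nat.fib_add_two (n := 2 * j + 2 * k)
      rw [show 2 * j + 2 * k + 2 = 2 * j + 2 * k + 1 + 1 by ring] at this
      exact_mod_cast this
    rw [h2] at h
    have hm1 : ((-1 : ℤ)) ^ (2 * k + 1) = -1 := by rw [pow_succ, pow_mul]; norm_num
    rw [hm1] at h
    linarith [h]
  have zT : (fib (4 * k + 2) : ℤ)
      = fib (2 * k) * fib (2 * k + 1) + fib (2 * k + 1) * fib (2 * k + 2) := by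
    have h := Nat.fib_add (2 * k) (2 * k + 1)
    rw [show 2 * k + (2 * k + 1) + 1 = 4 * k + 2 by ring, show 2 * k + 1 + 1 = 2 * k + 2 by ring] at h
    exact_mod_cast h
  have zg : (fib (2 * k + 2) : ℤ) = fib (2 * k) + fib (2 * k + 1) := by
    have := Nat.fib_add_two (n := 2 * k); exact_mod_cast this
  have zC2 : (fib (2 * j + 2 * k + 1) : ℤ) ^ 2
      = fib (2 * j) * fib (2 * j + 4 * k + 2) + (fib (2 * k + 1) : ℤ) ^ 2 := by
    have h := fibCatalan (2 * k + 1) (2 * j)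
    rw [show 2 * j + (2 * k + 1) = 2 * j + 2 * k + 1 by ring,
      show 2 * j + 2 * (2 * k + 1) = 2 * j + 4 * k + 2 by ring] at h
    have h1 : ((-1 : ℤ)) ^ (2 * j) = 1 := by rw [pow_mul]; norm_num
    rw [h1] at h
    linarith [h]
  -- real versions
  have rB : (fib (2 * j + 4 * k + 2) : ℝ)
      = fib (2 * j + 2 * k) * fib (2 * k + 1) + fib (2 * j + 2 * k + 1) * fib (2 * k + 2) := by
    exact_mod_cast zB
  have rA : (fib (2 * j) : ℝ)
      = ((fib (2 * j + 2 * k) : ℝ) + fib (2 * j + 2 * k + 1)) * fib (2 * k + 1)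
        - fib (2 * j + 2 * k + 1) * fib (2 * k + 2) := by exact_mod_cast zA
  have rT : (fib (4 * k + 2) : ℝ)
      = fib (2 * k) * fib (2 * k + 1) + fib (2 * k + 1) * fib (2 * k + 2) := by exact_mod_cast zT
  have rg : (fib (2 * k + 2) : ℝ) = fib (2 * k) + fib (2 * k + 1) := by exact_mod_cast zg
  have rC2 : (fib (2 * j + 2 * k + 1) : ℝ) ^ 2
      = fib (2 * j) * fib (2 * j + 4 * k + 2) + (fib (2 * k + 1) : ℝ) ^ 2 := by exact_mod_cast zC2
  have hA : (0 : ℝ) < (fib (2 * j) : ℝ) := by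
    exact_mod_cast Nat.fib_pos.mpr (show 0 < 2 * j by omega)
  have hB : (0 : ℝ) < (fib (2 * j + 4 * k + 2) : ℝ) := by
    exact_mod_cast Nat.fib_pos.mpr (show 0 < 2 * j + 4 * k + 2 by omega)
  have hC : (0 : ℝ) < (fib (2 * j + 2 * k + 1) : ℝ) := by
    exact_mod_cast Nat.fib_pos.mpr (show 0 < 2 * j + 2 * k + 1 by omega)
  have hf : (0 : ℝ) < (fib (2 * k + 1) : ℝ) := by
    exact_mod_cast Nat.fib_pos.mpr (show 0 < 2 * k + 1 by omega)
  have hT : (0 : ℝ) ≤ (fib (4 * k + 2) : ℝ) := by positivity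
  have hfB : (fib (2 * k + 1) : ℝ) ≤ (fib (2 * j + 4 * k + 2) : ℝ) := by
    exact_mod_cast Nat.fib_mono (show 2 * k + 1 ≤ 2 * j + 4 * k + 2 by omega)
  have hTC : (fib (4 * k + 2) : ℝ) < (fib (2 * j + 2 * k + 1) : ℝ) := by
    have h1 : fib (4 * k + 2) < fib (4 * k + 2 + 1) := Nat.fib_lt_fib_succ (by omega)
    have h2 : fib (4 * k + 2 + 1) ≤ fib (2 * j + 2 * k + 1) := Nat.fib_mono (by omega)
    exact_mod_cast h1.trans_le h2
  set A : ℝ := (fib (2 * j) : ℝ) with hAdef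
  set B : ℝ := (fib (2 * j + 4 * k + 2) : ℝ) with hBdef
  set C : ℝ := (fib (2 * j + 2 * k + 1) : ℝ) with hCdef
  set f : ℝ := (fib (2 * k + 1) : ℝ) with hfdef
  set T : ℝ := (fib (4 * k + 2) : ℝ) with hTdef
  have rTC : T * C = f * (B - A) := by
    linear_combination C * rT + f * rA - f * rB - f * C * rg
  have hxy : f / B * (T / C) < 1 := by
    rw [_root_.div_mul_div_comm]
    have hlt : f * T < B * C := by nlinarith
    exact (div_lt_one (by positivity)).mpr hlt
  have key := Real.arctan_add hxy
  have hden : 0 < 1 - f / B * (T / C) := by linarith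
  have heq : (f / B + T / C) / (1 - f / B * (T / C)) = f / A := by
    rw [div_eq_div_iff hden.ne' hA.ne']
    field_simp
    linear_combination C * rTC - T * rC2
  rw [heq] at key
  linarith [key]

theorem stmt17 (m t : ℕ) (hm : Odd m) (ht : 0 < t) :
    ∑ n ∈ Finset.Icc 1 t, Real.arctan ((Nat.fib (2 * m) : ℝ) / Nat.fib (2 * n + 2 * m - 1)) =
      ∑ n ∈ Finset.Icc 1 m, Real.arctan ((Nat.fib m : ℝ) / Nat.fib (2 * n + m - 1)) -
        ∑ n ∈ Finset.Icc 1 m, Real.arctan ((Nat.fib m : ℝ) / Nat.fib (2 * n + 2 * t + m - 1)) := by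
  obtain ⟨k, rfl⟩ := hm
  set G : ℕ → ℝ := fun i => Real.arctan ((fib (2 * k + 1) : ℝ) / fib (2 * i + 2 * k + 2)) with hG
  have K : ∀ a b : ℕ, ∑ i ∈ Finset.range (a + b), G i
      = ∑ i ∈ Finset.range a, G i + ∑ i ∈ Finset.range b, G (a + i) := by
    intro a b
    rw [← Finset.sum_range_add_sum_Ico G (Nat.le_add_right a b), Finset.sum_Ico_eq_sum_range]
    simp [Nat.add_sub_cancel_left]
  have hL : ∀ i : ℕ,
      Real.arctan ((fib (2 * (2 * k + 1)) : ℝ) / fib (2 * (1 + i) + 2 * (2 * k + 1) - 1))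
        = G i - G ((2 * k + 1) + i) := by
    intro i
    have h := arctan_step k (i + k + 1) (by omega) (by omega)
    rw [show 2 * (1 + i) + 2 * (2 * k + 1) - 1 = 2 * (i + k + 1) + 2 * k + 1 by omega,
      show 2 * (2 * k + 1) = 4 * k + 2 by ring, h,
      show 2 * (i + k + 1) + 4 * k + 2 = 2 * ((2 * k + 1) + i) + 2 * k + 2 by ring,
      show 2 * (i + k + 1) = 2 * i + 2 * k + 2 by ring]
  have hR1 : ∀ i : ℕ,
      Real.arctan ((fib (2 * k + 1) : ℝ) / fib (2 * (1 + i) + (2 * k + 1) - 1)) = G i := by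
    intro i
    rw [show 2 * (1 + i) + (2 * k + 1) - 1 = 2 * i + 2 * k + 2 by omega]
  have hR2 : ∀ i : ℕ,
      Real.arctan ((fib (2 * k + 1) : ℝ) / fib (2 * (1 + i) + 2 * t + (2 * k + 1) - 1))
        = G (t + i) := by
    intro i
    rw [show 2 * (1 + i) + 2 * t + (2 * k + 1) - 1 = 2 * (t + i) + 2 * k + 2 by omega]
  rw [← Finset.Ico_add_one_right_eq_Icc, ← Finset.Ico_add_one_right_eq_Icc,
    Finset.sum_Ico_eq_sum_range, Finset.sum_Ico_eq_sum_range, Finset.sum_Ico_eq_sum_range]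
  simp only [Nat.add_sub_cancel]
  simp only [hL, hR1, hR2]
  rw [Finset.sum_sub_distrib]
  have k1 := K t (2 * k + 1)
  have k2 := K (2 * k + 1) t
  rw [show 2 * k + 1 + t = t + (2 * k + 1) by omega] at k2
  linarith [k1, k2]
end

section
/- For all positive even integers m: the infinite series sum_{n=1}^{∞} arctan(F_{2m} / F_{2n+2m-1}) converges and equals sum_{n=1}^{m} arctan(L_m / L_{2n+m-1}). -/
/-!
For odd `k` and even `m`, Binet's formulas give
`L_m (L_{k+2m} - L_k) F_{k+m} = F_{2m} (L_k L_{k+2m} + L_m²)`, which by the subtraction formula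
for `arctan` says `arctan (F_{2m} / F_{k+m}) = arctan (L_m / L_k) - arctan (L_m / L_{k+2m})`.
With `k = 2n + m - 1` the series therefore telescopes with step `m`, and the terms
`arctan (L_m / L_k)` tend to `0`, leaving the first `m` of them.
-/

open Real Filter Finset Topology
open scoped goldenRatio

theorem lucasNat_pos : ∀ n, 0 < lucasNat n
  | 0 | 1 => by simp [lucasNat]
  | n + 2 => by rw [lucasNat]; exact Nat.add_pos_left (lucasNat_pos (n + 1)) _

theorem le_lucasNat : ∀ n, n ≤ lucasNat n
  | 0 | 1 => by simp [lucasNat]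
  | n + 2 => by
    rw [lucasNat]
    have := le_lucasNat (n + 1)
    have := lucasNat_pos n
    omega

theorem coe_lucasNat_eq : ∀ n, (lucasNat n : ℝ) = φ ^ n + ψ ^ n
  | 0 => by norm_num [lucasNat]
  | 1 => by simp [lucasNat, goldenRatio_add_goldenConj]
  | n + 2 => by
    rw [lucasNat, Nat.cast_add, coe_lucasNat_eq (n + 1), coe_lucasNat_eq n]
    linear_combination -(φ ^ n * goldenRatio_sq) - ψ ^ n * goldenConj_sq

theorem lucasNat_mul_lucasNat_sub_mul_fib {k m : ℕ} (hk : Odd k) (hm : Even m) :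
    (lucasNat m : ℝ) * (lucasNat (k + 2 * m) - lucasNat k) * Nat.fib (k + m) =
      Nat.fib (2 * m) * (lucasNat k * lucasNat (k + 2 * m) + lucasNat m ^ 2) := by
  have hψ : ψ = -φ⁻¹ := by rw [inv_goldenRatio, neg_neg]
  have hψk : ψ ^ k = -(φ ^ k)⁻¹ := by rw [hψ, hk.neg_pow, inv_pow]
  have hψm : ψ ^ m = (φ ^ m)⁻¹ := by rw [hψ, hm.neg_pow, inv_pow]
  have hφk : φ ^ k ≠ 0 := pow_ne_zero _ goldenRatio_ne_zero
  have hφm : φ ^ m ≠ 0 := pow_ne_zero _ goldenRatio_ne_zero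
  have h5 : √5 ≠ 0 := by positivity
  simp only [coe_fib_eq, coe_lucasNat_eq, pow_add, pow_mul', hψk, hψm]
  field_simp
  ring

theorem arctan_div_sub_arctan_div (c : ℝ) {a b : ℝ} (hab : 0 < a * b) :
    arctan (c / a) - arctan (c / b) = arctan (c * (b - a) / (a * b + c ^ 2)) := by
  have ha : a ≠ 0 := left_ne_zero_of_mul hab.ne'
  have hb : b ≠ 0 := right_ne_zero_of_mul hab.ne'
  have hden : a * b + c ^ 2 ≠ 0 := (add_pos_of_pos_of_nonneg hab (sq_nonneg c)).ne'
  have hlt : c / a * -(c / b) < 1 := by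
    have : c / a * -(c / b) = -(c ^ 2 / (a * b)) := by field_simp
    rw [this]
    linarith [div_nonneg (sq_nonneg c) hab.le]
  rw [sub_eq_add_neg, ← arctan_neg, arctan_add hlt]
  congr 1
  rw [eq_div_iff hden, div_mul_eq_mul_div, div_eq_iff (sub_pos.mpr hlt).ne']
  field_simp
  ring

theorem arctan_fib_div_fib {k m : ℕ} (hk : Odd k) (hm : Even m) :
    arctan (Nat.fib (2 * m) / Nat.fib (k + m)) =
      arctan (lucasNat m / lucasNat k) - arctan (lucasNat m / lucasNat (k + 2 * m)) := by
  have hLk : (0 : ℝ) < lucasNat k := mod_cast lucasNat_pos k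
  have hLk' : (0 : ℝ) < lucasNat (k + 2 * m) := mod_cast lucasNat_pos _
  have hF : (0 : ℝ) < Nat.fib (k + m) := mod_cast Nat.fib_pos.mpr (by have := hk.pos; omega)
  rw [arctan_div_sub_arctan_div _ (mul_pos hLk hLk')]
  congr 1
  rw [div_eq_div_iff hF.ne' (by positivity)]
  linear_combination -lucasNat_mul_lucasNat_sub_mul_fib hk hm

theorem sum_range_sub_comp_add {G : Type*} [AddCommGroup G] (g : ℕ → G) (m N : ℕ) :
    ∑ n ∈ range N, (g n - g (n + m)) = ∑ k ∈ range m, g k - ∑ k ∈ range m, g (N + k) := by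
  have h₁ := sum_range_add g N m
  have h₂ := sum_range_add g m N
  simp only [add_comm m] at h₂ ⊢
  rw [sum_sub_distrib, sub_eq_sub_iff_add_eq_add, ← h₁, h₂]

theorem hasSum_sub_comp_add_of_nonneg {g : ℕ → ℝ} (m : ℕ) (hg : Tendsto g atTop (𝓝 0))
    (hnonneg : ∀ n, 0 ≤ g n - g (n + m)) :
    HasSum (fun n => g n - g (n + m)) (∑ k ∈ range m, g k) := by
  rw [hasSum_iff_tendsto_nat_of_nonneg hnonneg]
  simp only [sum_range_sub_comp_add]
  have htail : Tendsto (fun N => ∑ k ∈ range m, g (N + k)) atTop (𝓝 0) := by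
    simpa using tendsto_finsetSum (range m) fun k _ => hg.comp (tendsto_add_atTop_nat k)
  simpa using tendsto_const_nhds.sub htail

theorem stmt18_general (m : ℕ) (hme : Even m) :
    HasSum (fun n : ℕ => Real.arctan ((Nat.fib (2 * m) : ℝ) / Nat.fib (2 * (n + 1) + 2 * m - 1)))
      (∑ n ∈ Finset.Icc 1 m, Real.arctan ((lucasNat m : ℝ) / lucasNat (2 * n + m - 1))) := by
  set g : ℕ → ℝ := fun n => arctan (lucasNat m / lucasNat (2 * n + m + 1)) with hg
  have hterm (n : ℕ) : arctan ((Nat.fib (2 * m) : ℝ) / Nat.fib (2 * (n + 1) + 2 * m - 1)) =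
      g n - g (n + m) := by
    have hk : Odd (2 * n + m + 1) := (even_two_mul n).add hme |>.add_one
    rw [show 2 * (n + 1) + 2 * m - 1 = 2 * n + m + 1 + m by omega, arctan_fib_div_fib hk hme]
    simp only [hg, show 2 * n + m + 1 + 2 * m = 2 * (n + m) + m + 1 by ring]
  have hsum : ∑ n ∈ Icc 1 m, arctan ((lucasNat m : ℝ) / lucasNat (2 * n + m - 1)) =
      ∑ k ∈ range m, g k := by
    rw [← Ico_add_one_right_eq_Icc, sum_Ico_eq_sum_range]
    refine sum_congr (by simp) fun k _ => ?_
    simp only [hg, show 2 * (1 + k) + m - 1 = 2 * k + m + 1 by omega]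
  have hg0 : Tendsto g atTop (𝓝 0) := by
    have hL : Tendsto (fun n => (lucasNat (2 * n + m + 1) : ℝ)) atTop atTop :=
      tendsto_natCast_atTop_atTop.comp <| tendsto_atTop_mono
        (fun n => (show n ≤ 2 * n + m + 1 by omega).trans (le_lucasNat _)) tendsto_id
    have := (continuous_arctan.tendsto 0).comp
      ((tendsto_const_nhds (x := (lucasNat m : ℝ))).div_atTop hL)
    rwa [arctan_zero] at this
  rw [hsum, funext hterm]
  exact hasSum_sub_comp_add_of_nonneg m hg0 fun n => hterm n ▸ arctan_nonneg.mpr (by positivity)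

theorem stmt18 (m : ℕ) (hm : 0 < m) (hme : Even m) :
    HasSum (fun n : ℕ => Real.arctan ((Nat.fib (2 * m) : ℝ) / Nat.fib (2 * (n + 1) + 2 * m - 1)))
      (∑ n ∈ Finset.Icc 1 m, Real.arctan ((lucasNat m : ℝ) / lucasNat (2 * n + m - 1))) :=
  stmt18_general m hme
end

section
/- For all positive odd integers m: the infinite series 2 * sum_{n=1}^{∞} arctan(L_m / L_{2n+m-1}) converges and equals sum_{n=1}^{m} arctan(2 / L_{2n-1}). -/
open Real Finset

noncomputable def lphi : ℝ := (1 + Real.sqrt 5) / 2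
noncomputable def lpsi : ℝ := (1 - Real.sqrt 5) / 2

lemma sqrt5_sq : Real.sqrt 5 ^ 2 = 5 := Real.sq_sqrt (by norm_num)

lemma one_lt_lphi : 1 < lphi := by
  have h0 : 0 ≤ Real.sqrt 5 := Real.sqrt_nonneg 5
  have h : 1 < Real.sqrt 5 := by nlinarith [sqrt5_sq]
  unfold lphi; linarith

lemma lphi_pos : (0:ℝ) < lphi := lt_trans one_pos one_lt_lphi

lemma lphi_sq : lphi ^ 2 = lphi + 1 := by
  unfold lphi; linear_combination (1/4 : ℝ) * sqrt5_sq

lemma lpsi_sq : lpsi ^ 2 = lpsi + 1 := by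
  unfold lpsi; linear_combination (1/4 : ℝ) * sqrt5_sq

lemma lpsi_eq : lpsi = -lphi⁻¹ := by
  have h : lphi * lpsi = -1 := by
    unfold lphi lpsi; linear_combination (-(1:ℝ)/4) * sqrt5_sq
  have h0 : lphi ≠ 0 := lphi_pos.ne'
  field_simp
  linear_combination h

lemma lucas_real_s19 : ∀ k : ℕ, (lucasNat k : ℝ) = lphi ^ k + lpsi ^ k
  | 0 => by norm_num [lucasNat]
  | 1 => by
      norm_num [lucasNat]
      unfold lphi lpsi; ring
  | (k + 2) => by
      have h1 := lucas_real_s19 (k + 1)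
      have h2 := lucas_real_s19 k
      simp only [lucasNat]
      push_cast
      rw [h1, h2]
      linear_combination (-(lphi ^ k)) * lphi_sq + (-(lpsi ^ k)) * lpsi_sq

lemma lucas_odd {k : ℕ} (hk : Odd k) :
    (lucasNat k : ℝ) = lphi ^ k - (lphi ^ k)⁻¹ := by
  rw [lucas_real_s19, lpsi_eq, hk.neg_pow, inv_pow]; ring

lemma lucas_even {k : ℕ} (hk : Even k) :
    (lucasNat k : ℝ) = lphi ^ k + (lphi ^ k)⁻¹ := by
  rw [lucas_real_s19, lpsi_eq, hk.neg_pow, inv_pow]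

lemma my_arctan_nonneg {x : ℝ} (hx : 0 ≤ x) : 0 ≤ Real.arctan x := by
  rw [← Real.arctan_zero]
  exact Real.arctan_strictMono.monotone hx

lemma my_arctan_le_self {x : ℝ} (hx : 0 ≤ x) : Real.arctan x ≤ x := by
  rcases lt_or_ge x (Real.pi / 2) with h | h
  · calc Real.arctan x ≤ Real.arctan (Real.tan x) :=
        Real.arctan_strictMono.monotone (Real.le_tan hx h)
      _ = x := Real.arctan_tan (by linarith [Real.pi_pos]) h
  · exact le_trans (Real.arctan_lt_pi_div_two x).le h

lemma my_arctan_sub {x y : ℝ} (hx : 0 < x) (hy : 0 < y) :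
    Real.arctan x - Real.arctan y = Real.arctan ((x - y) / (1 + x * y)) := by
  have h : x * (-y) < 1 := by nlinarith
  have h2 := Real.arctan_add h
  rw [Real.arctan_neg] at h2
  rw [sub_eq_add_neg, h2]
  congr 1
  ring

lemma my_arctan_double {x : ℝ} (h0 : 0 < x) (h1 : x < 1) :
    2 * Real.arctan x = Real.arctan (2 * x / (1 - x * x)) := by
  have h := Real.arctan_add (x := x) (y := x) (by nlinarith)
  rw [two_mul, h]
  congr 1
  ring

lemma key_frac (A B : ℝ) (hA : 1 < A) (hB : 1 < B) :
    (A - A⁻¹) / (B * A + (B * A)⁻¹) =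
      (B⁻¹ - (B * A ^ 2)⁻¹) / (1 + B⁻¹ * (B * A ^ 2)⁻¹) := by
  have hA0 : A ≠ 0 := by positivity
  have hB0 : B ≠ 0 := by positivity
  have hd1 : B * A + (B * A)⁻¹ ≠ 0 := by positivity
  have hd2 : 1 + B⁻¹ * (B * A ^ 2)⁻¹ ≠ 0 := by positivity
  field_simp

theorem stmt19 (m : ℕ) (hm : Odd m) :
    ∃ S : ℝ, HasSum (fun n : ℕ => Real.arctan ((lucasNat m : ℝ) / lucasNat (2 * (n + 1) + m - 1))) S ∧
      2 * S = ∑ n ∈ Finset.Icc 1 m, Real.arctan (2 / (lucasNat (2 * n - 1) : ℝ)) := by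
  obtain ⟨j, hj⟩ := hm
  have hm1 : 1 ≤ m := by omega
  have hφ1 : 1 < lphi := one_lt_lphi
  have hφ0 : (0:ℝ) < lphi := lphi_pos
  set h : ℕ → ℝ := fun n => Real.arctan ((lphi ^ (2 * n + 1))⁻¹) with hh
  have hpow : ∀ n : ℕ, 1 < lphi ^ (2 * n + 1) := fun n => one_lt_pow₀ hφ1 (by omega)
  -- summability
  have hsum : Summable h := by
    have hr1 : (lphi⁻¹) ^ 2 < 1 := by
      have : lphi⁻¹ < 1 := inv_lt_one_of_one_lt₀ hφ1
      have h0 : (0:ℝ) ≤ lphi⁻¹ := by positivity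
      nlinarith
    have hg : Summable (fun n : ℕ => lphi⁻¹ * ((lphi⁻¹) ^ 2) ^ n) :=
      (summable_geometric_of_lt_one (by positivity) hr1).mul_left _
    refine Summable.of_nonneg_of_le (fun n => my_arctan_nonneg (by positivity)) (fun n => ?_) hg
    have he : ((lphi ^ (2 * n + 1))⁻¹ : ℝ) = lphi⁻¹ * ((lphi⁻¹) ^ 2) ^ n := by
      rw [← inv_pow, pow_succ, pow_mul, mul_comm]
    calc h n ≤ (lphi ^ (2 * n + 1))⁻¹ := my_arctan_le_self (by positivity)
      _ = _ := he
  obtain ⟨T, hT⟩ := hsum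
  have hshift : HasSum (fun n => h (n + m)) (T - ∑ i ∈ Finset.range m, h i) :=
    (hasSum_nat_add_iff' m).mpr hT
  have hg : HasSum (fun n => h n - h (n + m)) (∑ i ∈ Finset.range m, h i) := by
    simpa using hT.sub hshift
  refine ⟨∑ i ∈ Finset.range m, h i, ?_, ?_⟩
  · have hfun : (fun n : ℕ => Real.arctan ((lucasNat m : ℝ) / lucasNat (2 * (n + 1) + m - 1)))
        = fun n => h n - h (n + m) := by
      funext n
      have hidx : 2 * (n + 1) + m - 1 = 2 * n + m + 1 := by omega
      rw [hidx]
      have hA : (1:ℝ) < lphi ^ m := one_lt_pow₀ hφ1 (by omega)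
      have hB := hpow n
      have he1 : lphi ^ (2 * n + m + 1) = lphi ^ (2 * n + 1) * lphi ^ m := by
        rw [← pow_add]; congr 1; omega
      have he2 : lphi ^ (2 * (n + m) + 1) = lphi ^ (2 * n + 1) * (lphi ^ m) ^ 2 := by
        rw [← pow_mul, ← pow_add]; congr 1; omega
      have hev : Even (2 * n + m + 1) := ⟨n + j + 1, by omega⟩
      rw [lucas_odd ⟨j, hj⟩, lucas_even hev, he1]
      have hx : (0:ℝ) < (lphi ^ (2 * n + 1))⁻¹ := by positivity
      have hy : (0:ℝ) < (lphi ^ (2 * (n + m) + 1))⁻¹ := by positivity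
      rw [hh]
      simp only
      rw [my_arctan_sub hx hy, he2]
      congr 1
      exact key_frac _ _ hA hB
    rw [hfun]
    exact hg
  · rw [Finset.mul_sum, show Finset.Icc 1 m = Finset.Ico 1 (m + 1) from (Finset.Ico_add_one_right_eq_Icc 1 m).symm,
      Finset.sum_Ico_eq_sum_range]
    simp only [Nat.add_sub_cancel]
    refine Finset.sum_congr rfl fun i _ => ?_
    have hidx : 2 * (1 + i) - 1 = 2 * i + 1 := by omega
    rw [hidx]
    have hB := hpow i
    have hxlt : (lphi ^ (2 * i + 1))⁻¹ < 1 := inv_lt_one_of_one_lt₀ hB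
    rw [hh]
    simp only
    rw [my_arctan_double (by positivity) hxlt, lucas_odd ⟨i, by omega⟩]
    congr 1
    generalize hBdef : lphi ^ (2 * i + 1) = B at *
    have hB0 : (0:ℝ) < B := lt_trans one_pos hB
    have hd : B - B⁻¹ ≠ 0 := by
      have : B⁻¹ < B := lt_trans hxlt hB
      linarith
    have hd2 : 1 - B⁻¹ * B⁻¹ ≠ 0 := by
      have h0 : (0:ℝ) ≤ B⁻¹ := by positivity
      nlinarith
    field_simp
end
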